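/- arXiv:2003.13769 — 5 statements merged into one kernel-verified Lean document; each statement's English description precedes it below -/
import Mathlib

section
/- Let V be a nonzero finite-dimensional real vector space and E a nondegenerate alternating bilinear form on V. Then the Siegel space 𝔖(V, E) is nonempty: there exists a linear endomorphism J of V with J ∘ J = -id such that E(x, Jy) = E(y, Jx) for all x, y ∈ V and E(x, Jx) > 0 for all x ≠ 0. -/
open Matrix
open scoped MatrixOrder

/-!
In a basis, `E` has an invertible skew-symmetric Gram matrix `G`. Its polar part
`S = √(Gᵀ G) = √(-G²)` is positive definite and commutes with `G`, so `K = -S⁻¹ G` satisfies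
`K² = S⁻² G² = -1` and `G K = S`: the form `(x, y) ↦ E x (J y)` has the positive definite Gram
matrix `S`, where `J` is the endomorphism with matrix `K`.
-/

theorem Units.exists_mul_self_eq_neg_one_and_mul_eq {A : Type*} [Ring A] (s : Aˣ) {g : A}
    (hcomm : Commute (s : A) g) (hs : (s : A) * s = -(g * g)) :
    ∃ k : A, k * k = -1 ∧ g * k = s := by
  have hcomm' : Commute (↑s⁻¹ : A) g := hcomm.units_inv_left
  refine ⟨-(↑s⁻¹ * g), ?_, ?_⟩
  · calc -(↑s⁻¹ * g) * -(↑s⁻¹ * g) = ↑s⁻¹ * ↑s⁻¹ * (g * g) := by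
          rw [neg_mul_neg, mul_assoc, ← mul_assoc g, ← hcomm'.eq, mul_assoc, mul_assoc]
      _ = -1 := by
          rw [← neg_eq_iff_eq_neg.mpr hs, mul_neg, mul_assoc, ← mul_assoc (↑s⁻¹ : A) s,
            Units.inv_mul, one_mul, Units.inv_mul]
  · calc g * -(↑s⁻¹ * g) = ↑s⁻¹ * -(g * g) := by
          rw [mul_neg, ← mul_assoc, ← hcomm'.eq, mul_assoc, mul_neg]
      _ = s := by rw [← hs, ← mul_assoc, Units.inv_mul, one_mul]

theorem Matrix.exists_mul_self_eq_neg_one_posDef_mul_of_transpose_eq_neg {n : Type*} [Fintype n]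
    [DecidableEq n] {G : Matrix n n ℝ} (hskew : Gᵀ = -G) (hG : IsUnit G) :
    ∃ K : Matrix n n ℝ, K * K = -1 ∧ (G * K).PosDef := by
  have hP : (Gᵀ * G).PosDef := by
    simpa using PosDef.conjTranspose_mul_self G (mulVec_injective_iff_isUnit.mpr hG)
  set S := CFC.sqrt (Gᵀ * G)
  have hS : S.PosDef := hP.isStrictlyPositive.sqrt.posDef
  have hSS : S * S = -(G * G) := by
    rw [CFC.sqrt_mul_sqrt_self _ hP.posSemidef.nonneg, hskew, neg_mul]
  have hcomm : Commute S G := by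
    refine Commute.cfcₙ_nnreal ?_ _
    rw [hskew, neg_mul]
    exact ((Commute.refl G).mul_left (Commute.refl G)).neg_left
  obtain ⟨K, hK, hGK⟩ := hS.isUnit.unit.exists_mul_self_eq_neg_one_and_mul_eq hcomm hSS
  exact ⟨K, hK, hGK ▸ hS⟩

namespace LinearMap.BilinForm

variable {ι M : Type*} [Fintype ι] [DecidableEq ι] [AddCommGroup M]

theorem toMatrix_transpose_of_isAlt {R : Type*} [CommRing R] [Module R M]
    (b : Module.Basis ι R M) {B : LinearMap.BilinForm R M} (hB : B.IsAlt) :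
    (toMatrix b B)ᵀ = -toMatrix b B := by
  ext i j
  simpa using (LinearMap.IsAlt.neg hB (b i) (b j)).symm

variable [Module ℝ M] (b : Module.Basis ι ℝ M) {B : LinearMap.BilinForm ℝ M}

theorem isSymm_of_posDef_toMatrix (h : (toMatrix b B).PosDef) : B.IsSymm :=
  (isSymm_toMatrix_iff_isSymm b).mp <|
    (conjTranspose_eq_transpose_of_trivial _).symm.trans h.isHermitian

theorem apply_self_pos_of_posDef_toMatrix (h : (toMatrix b B).PosDef) {x : M} (hx : x ≠ 0) :
    0 < B x x := by
  rw [apply_eq_dotProduct_toMatrix_mulVec b]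
  simpa using h.dotProduct_mulVec_pos (by simpa using hx)

end LinearMap.BilinForm

theorem siegel_space_nonempty_general
    (V : Type*) [AddCommGroup V] [Module ℝ V] [FiniteDimensional ℝ V]
    (E : V →ₗ[ℝ] V →ₗ[ℝ] ℝ)
    (halt : ∀ x, E x x = 0)
    (hnd : ∀ x, (∀ y, E x y = 0) → x = 0) :
    ∃ J : V →ₗ[ℝ] V,
      J ∘ₗ J = -LinearMap.id ∧
      (∀ x y, E x (J y) = E y (J x)) ∧
      (∀ x, x ≠ 0 → 0 < E x (J x)) := by
  let b := Module.finBasis ℝ V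
  have hG : IsUnit (LinearMap.BilinForm.toMatrix b E) := by
    rw [isUnit_iff_isUnit_det, isUnit_iff_ne_zero]
    exact (LinearMap.separatingLeft_iff_det_ne_zero b).mp hnd
  obtain ⟨K, hK, hGK⟩ := exists_mul_self_eq_neg_one_posDef_mul_of_transpose_eq_neg
    (LinearMap.BilinForm.toMatrix_transpose_of_isAlt b halt) hG
  rw [← LinearMap.toMatrix_toLin b b K, ← LinearMap.BilinForm.toMatrix_compRight] at hGK
  refine ⟨toLin b b K, ?_, fun x y => ?_, fun x hx => ?_⟩
  · rw [← toLin_mul, hK, map_neg, toLin_one]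
  · exact (LinearMap.BilinForm.isSymm_of_posDef_toMatrix b hGK).eq x y
  · exact LinearMap.BilinForm.apply_self_pos_of_posDef_toMatrix b hGK hx

/-- The Siegel space of a nonzero finite-dimensional real symplectic space is
nonempty. -/
theorem siegel_space_nonempty
    (V : Type*) [AddCommGroup V] [Module ℝ V] [FiniteDimensional ℝ V] [Nontrivial V]
    (E : V →ₗ[ℝ] V →ₗ[ℝ] ℝ)
    (halt : ∀ x, E x x = 0)
    (hnd : ∀ x, (∀ y, E x y = 0) → x = 0) :
    ∃ J : V →ₗ[ℝ] V,
      J ∘ₗ J = -LinearMap.id ∧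
      (∀ x y, E x (J y) = E y (J x)) ∧
      (∀ x, x ≠ 0 → 0 < E x (J x)) :=
  siegel_space_nonempty_general V E halt hnd
end

section
/- Let K be a subfield of ℝ, V a finite-dimensional K-vector space, and S a set of K-linear automorphisms of V. Suppose there exists a symmetric, positive definite, ℝ-bilinear form β on the base change ℝ ⊗[K] V that is invariant under the ℝ-linear extension of every g ∈ S (i.e., β(g·x, g·y) = β(x, y) for all x, y). Then there exists a symmetric K-bilinear form γ on V that is invariant under every g ∈ S (γ(gx, gy) = γ(x, y)) and whose extension to ℝ ⊗[K] V is positive definite. -/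
/-!
The values `β (1 ⊗ x) (1 ⊗ y)` span a finite-dimensional `K`-subspace of `ℝ`. Expanding them in a
`K`-basis `e` of it writes `β = ∑ eₖ • γₖ` with `K`-valued forms `γₖ`, and since the coordinates
factor through `β`, each `γₖ` inherits every `K`-linear relation of `β`: symmetry and
`S`-invariance. Positive definiteness of `∑ tₖ γₖ` is an open condition on `t ∈ ℝᵐ` (by
compactness of a unit sphere), so it still holds at some rational `q` near `e`, and
`γ = ∑ qₖ γₖ` is the required form.
-/

open TensorProduct

section Expansion

variable {K M N L : Type*} [Field K] [AddCommGroup L] [Module K L]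
  [AddCommGroup M] [Module K M] [AddCommGroup N] [Module K N]

theorem LinearMap.exists_eq_sum_smul_of_finite [Module.Finite K M] (f : M →ₗ[K] L) :
    ∃ (m : ℕ) (c : Fin m → M →ₗ[K] K) (e : Fin m → L),
      (∀ x, f x = ∑ k, c k x • e k) ∧ ∀ k x y, f x = f y → c k x = c k y := by
  let b := Module.finBasis K (LinearMap.range f)
  refine ⟨_, fun k => b.coord k ∘ₗ f.rangeRestrict, fun k => b k, fun x => ?_,
    fun k x y hxy => ?_⟩
  · have h := congrArg Subtype.val (b.sum_repr (f.rangeRestrict x))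
    rw [Submodule.coe_sum] at h
    simpa using h.symm
  · simp [show f.rangeRestrict x = f.rangeRestrict y from Subtype.ext hxy]

theorem LinearMap.exists_eq_sum_smul_of_finite₂ [Module.Finite K M] [Module.Finite K N]
    (β : M →ₗ[K] N →ₗ[K] L) :
    ∃ (m : ℕ) (γ : Fin m → M →ₗ[K] N →ₗ[K] K) (e : Fin m → L),
      (∀ x y, β x y = ∑ k, γ k x y • e k) ∧
      ∀ k x y x' y', β x y = β x' y' → γ k x y = γ k x' y' := by
  obtain ⟨m, c, e, hf, hc⟩ := (TensorProduct.lift β).exists_eq_sum_smul_of_finite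
  exact ⟨m, fun k => (TensorProduct.mk K M N).compr₂ (c k), e,
    fun x y => by simpa using hf (x ⊗ₜ y),
    fun k x y x' y' h => hc k _ _ (by simpa using h)⟩

end Expansion

section Positivity

variable {ι : Type*} [Fintype ι]

theorem isOpen_setOf_sum_smul_posDef_of_normedSpace {E : Type*} [NormedAddCommGroup E]
    [NormedSpace ℝ E] [FiniteDimensional ℝ E] (B : ι → LinearMap.BilinForm ℝ E) :
    IsOpen {t : ι → ℝ | ∀ x ≠ 0, 0 < (∑ i, t i • B i) x x} := by
  have : IsModuleTopology ℝ E := isModuleTopologyOfFiniteDimensional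
  have hB : ∀ i, Continuous fun x => B i x x := fun i =>
    (IsModuleTopology.continuous_bilinear_of_finite_left (B i)).comp
      (continuous_id.prodMk continuous_id)
  have hcont : Continuous fun p : (ι → ℝ) × E => (∑ i, p.1 i • B i) p.2 p.2 := by
    simp only [LinearMap.BilinForm.sum_apply, LinearMap.smul_apply, smul_eq_mul]
    fun_prop
  rw [isOpen_iff_eventually]
  intro t ht
  have hsphere : ∀ᶠ s in nhds t, ∀ x ∈ Metric.sphere (0 : E) 1, 0 < (∑ i, s i • B i) x x :=
    (isCompact_sphere 0 1).eventually_forall_of_forall_eventually fun x hx =>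
      hcont.continuousAt.eventually (lt_mem_nhds (ht x (ne_zero_of_mem_unit_sphere ⟨x, hx⟩)))
  filter_upwards [hsphere] with s hs x hx
  have hxnorm : 0 < ‖x‖ := norm_pos_iff.mpr hx
  have hu := hs (‖x‖⁻¹ • x) (by simp [norm_smul, hxnorm.ne'])
  simp only [map_smul, LinearMap.smul_apply, smul_eq_mul, ← mul_assoc] at hu
  exact pos_of_mul_pos_right hu (by positivity)

theorem isOpen_setOf_sum_smul_posDef {F : Type*} [AddCommGroup F] [Module ℝ F]
    [FiniteDimensional ℝ F] (B : ι → LinearMap.BilinForm ℝ F) :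
    IsOpen {t : ι → ℝ | ∀ x ≠ 0, 0 < (∑ i, t i • B i) x x} := by
  let e := (Module.finBasis ℝ F).equivFun.symm
  convert isOpen_setOf_sum_smul_posDef_of_normedSpace
    fun i => (B i).compl₁₂ e.toLinearMap e.toLinearMap using 3 with t
  simp only [e.surjective.forall, ne_eq, e.map_eq_zero_iff, LinearMap.BilinForm.sum_apply,
    LinearMap.smul_apply, LinearMap.compl₁₂_apply, LinearEquiv.coe_coe]

theorem exists_rat_sum_smul_posDef {F : Type*} [AddCommGroup F] [Module ℝ F]
    [FiniteDimensional ℝ F] (B : ι → LinearMap.BilinForm ℝ F) {t : ι → ℝ}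
    (ht : ∀ x ≠ 0, 0 < (∑ i, t i • B i) x x) :
    ∃ q : ι → ℚ, ∀ x ≠ 0, 0 < (∑ i, (q i : ℝ) • B i) x x :=
  (DenseRange.piMap fun _ => Rat.denseRange_cast).exists_mem_open
    (isOpen_setOf_sum_smul_posDef B) ⟨t, ht⟩

end Positivity

/-- If a set `S` of automorphisms of a `K`-vector space `V` (`K` a subfield of `ℝ`)
leaves invariant some symmetric positive definite `ℝ`-bilinear form on `ℝ ⊗[K] V`,
then it leaves invariant a symmetric `K`-bilinear form on `V` whose real extension
is positive definite. -/
theorem exists_rational_invariant_positive_form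
    (K : Type*) [Field K] [Algebra K ℝ]
    (V : Type*) [AddCommGroup V] [Module K V] [FiniteDimensional K V]
    (S : Set (V ≃ₗ[K] V))
    (β : (ℝ ⊗[K] V) →ₗ[ℝ] (ℝ ⊗[K] V) →ₗ[ℝ] ℝ)
    (hβsymm : ∀ x y, β x y = β y x)
    (hβpos : ∀ x, x ≠ 0 → 0 < β x x)
    (hβinv : ∀ g ∈ S, ∀ x y,
      β (LinearMap.baseChange ℝ g.toLinearMap x) (LinearMap.baseChange ℝ g.toLinearMap y)
        = β x y) :
    ∃ γ : V →ₗ[K] V →ₗ[K] K,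
      (∀ x y, γ x y = γ y x) ∧
      (∀ g ∈ S, ∀ x y, γ (g x) (g y) = γ x y) ∧
      (∀ z : ℝ ⊗[K] V, z ≠ 0 → 0 < LinearMap.BilinForm.baseChange ℝ γ z z) := by
  obtain ⟨m, γ, e, hβ₀, hγ⟩ := ((β.restrictScalars₁₂ K K).compl₁₂
    (TensorProduct.mk K ℝ V 1) (TensorProduct.mk K ℝ V 1)).exists_eq_sum_smul_of_finite₂
  have hβ : β = ∑ k, e k • LinearMap.BilinForm.baseChange ℝ (γ k) := by
    ext x y
    simpa using hβ₀ x y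
  obtain ⟨q, hq⟩ :=
    exists_rat_sum_smul_posDef (fun k => LinearMap.BilinForm.baseChange ℝ (γ k)) (hβ ▸ hβpos)
  refine ⟨∑ k, (q k : K) • γ k, fun x y => ?_, fun g hg x y => ?_, fun z hz => ?_⟩
  · simp [hγ _ x y y x (hβsymm _ _)]
  · simp [hγ _ (g x) (g y) x y (hβinv g hg (1 ⊗ₜ x) (1 ⊗ₜ y))]
  · have : LinearMap.BilinForm.baseChange ℝ (∑ k, (q k : K) • γ k) =
        ∑ k, (q k : ℝ) • LinearMap.BilinForm.baseChange ℝ (γ k) := by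
      ext x y
      simp [Algebra.smul_def]
    exact this ▸ hq z hz
end

section
/- Let F be a field, M a finite index type, (V_α)_{α ∈ M} a family of F-vector spaces, and for each α ∈ M let E_α be an alternating bilinear form on V_α (E_α(x,x) = 0 for all x) and γ_α a symmetric bilinear form on V_α. Let B be a bilinear form on the tensor product ⨂_{α ∈ M} V_α such that on pure tensors B(⊗_α x_α, ⊗_α y_α) = Σ_{α ∈ M} ( E_α(x_α, y_α) · ∏_{β ∈ M, β ≠ α} γ_β(x_β, y_β) ). Then B is skew-symmetric: B(x, y) = -B(y, x) for all x, y in the tensor product. -/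
open scoped TensorProduct

/-! On pure tensors each summand changes sign under swapping `x` and `y`, since `E α` is
alternating, hence antisymmetric, while the `γ β` are symmetric. Two bilinear forms on a
tensor product that agree on pure tensors are equal, so `B = -B.flip`. -/

theorem PiTensorProduct.bilin_ext {R ι κ N : Type*} [CommSemiring R] {s : ι → Type*}
    {t : κ → Type*} [∀ i, AddCommMonoid (s i)] [∀ i, Module R (s i)]
    [∀ k, AddCommMonoid (t k)] [∀ k, Module R (t k)] [AddCommMonoid N] [Module R N]
    {φ₁ φ₂ : (⨂[R] i, s i) →ₗ[R] (⨂[R] k, t k) →ₗ[R] N}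
    (H : ∀ x y, φ₁ (tprod R x) (tprod R y) = φ₂ (tprod R x) (tprod R y)) : φ₁ = φ₂ :=
  ext <| MultilinearMap.ext fun x ↦ ext <| MultilinearMap.ext fun y ↦ H x y

theorem sum_alt_mul_prod_symm_swap {R M : Type*} [CommRing R] [Fintype M] [DecidableEq M]
    {V : M → Type*} [∀ α, AddCommMonoid (V α)] [∀ α, Module R (V α)]
    {E γ : ∀ α, V α →ₗ[R] V α →ₗ[R] R} (hE : ∀ α, (E α).IsAlt)
    (hγ : ∀ α x y, γ α x y = γ α y x) (x y : ∀ α, V α) :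
    ∑ α, E α (x α) (y α) * ∏ β ∈ Finset.univ.erase α, γ β (x β) (y β)
      = -∑ α, E α (y α) (x α) * ∏ β ∈ Finset.univ.erase α, γ β (y β) (x β) := by
  rw [← Finset.sum_neg_distrib]
  refine Finset.sum_congr rfl fun α _ ↦ ?_
  rw [← (hE α).neg, Finset.prod_congr rfl fun β _ ↦ hγ β (x β) (y β), neg_mul]

/-- The form `Ẽ(⊗x_α, ⊗y_α) = Σ_α E_α(x_α, y_α) ∏_{β ≠ α} γ_β(x_β, y_β)` on a tensor
product of vector spaces is skew-symmetric when each `E_α` is alternating and each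
`γ_β` is symmetric. -/
theorem tensor_sum_form_skew
    (F : Type*) [Field F]
    (M : Type*) [Fintype M] [DecidableEq M]
    (V : M → Type*) [∀ α, AddCommGroup (V α)] [∀ α, Module F (V α)]
    (E : ∀ α, V α →ₗ[F] V α →ₗ[F] F)
    (hE : ∀ α, ∀ x, E α x x = 0)
    (γ : ∀ α, V α →ₗ[F] V α →ₗ[F] F)
    (hγ : ∀ α, ∀ x y, γ α x y = γ α y x)
    (B : (PiTensorProduct F V) →ₗ[F] (PiTensorProduct F V) →ₗ[F] F)
    (hB : ∀ x y : (α : M) → V α,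
      B (PiTensorProduct.tprod F x) (PiTensorProduct.tprod F y)
        = ∑ α : M, (E α (x α) (y α)) *
            ∏ β ∈ Finset.univ.erase α, γ β (x β) (y β)) :
    ∀ x y : PiTensorProduct F V, B x y = -B y x := by
  have hskew : B = -B.flip := PiTensorProduct.bilin_ext fun x y ↦ by
    rw [LinearMap.neg_apply, LinearMap.neg_apply, LinearMap.flip_apply, hB, hB]
    exact sum_alt_mul_prod_symm_swap hE hγ x y
  exact LinearMap.congr_fun₂ hskew
end

section
/- Let F be a field, M a finite index type, (V_α)_{α ∈ M} a family of F-vector spaces, α₀ ∈ M a distinguished index, and for each α ∈ M let E_α be an alternating bilinear form on V_α and γ_α a symmetric bilinear form on V_α. Let J be a linear endomorphism of V_{α₀} such that E_{α₀}(x, Jy) = E_{α₀}(y, Jx) for all x, y ∈ V_{α₀} and γ_{α₀}(x, Jy) = -γ_{α₀}(y, Jx) for all x, y ∈ V_{α₀}. Let J̃ be the endomorphism of ⨂_{α ∈ M} V_α induced by the family of maps (I_α)_{α ∈ M} with I_{α₀} = J and I_α = id for α ≠ α₀. Let B be a bilinear form on ⨂_{α ∈ M} V_α such that on pure tensors B(⊗_α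 x_α, ⊗_α y_α) = Σ_{α ∈ M} ( E_α(x_α, y_α) · ∏_{β ∈ M, β ≠ α} γ_β(x_β, y_β) ). Then B(x, J̃ y) = B(y, J̃ x) for all x, y in the tensor product, i.e., the bilinear form (x, y) ↦ B(x, J̃ y) is symmetric. -/
open scoped TensorProduct

/-!
Both sides are bilinear in `(x, y)`, so it suffices to compare them on pure tensors. There the
form is a sum over `α` of products of one `E`-factor and `γ`-factors twisted by `J̃`, and
exchanging `x` and `y` flips the sign of exactly the twisted factors that are antisymmetric:
for `α = α₀` none (`E_{α₀}(x, Jy)` is symmetric and the other `γ_β` are untwisted), for `α ≠ α₀`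
two (the alternating `E_α` and `γ_{α₀}(x, Jy)`). So every summand is symmetric.
-/

theorem Finset.prod_eq_neg_prod_of_eq_neg_of_eq {ι R : Type*} [CommRing R] [DecidableEq ι]
    {s : Finset ι} {f g : ι → R} {i₀ : ι} (hi₀ : i₀ ∈ s) (h₀ : f i₀ = -g i₀)
    (h : ∀ i ∈ s, i ≠ i₀ → f i = g i) : ∏ i ∈ s, f i = -∏ i ∈ s, g i := by
  rw [← s.mul_prod_erase f hi₀, ← s.mul_prod_erase g hi₀, h₀, neg_mul,
    Finset.prod_congr rfl fun i hi => h i (Finset.mem_of_mem_erase hi) (Finset.ne_of_mem_erase hi)]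

theorem Finset.sum_mul_prod_erase_eq_of_signs {ι R : Type*} [CommRing R] [Fintype ι]
    [DecidableEq ι] (i₀ : ι) {e e' g g' : ι → R} (he₀ : e' i₀ = e i₀) (hg₀ : g' i₀ = -g i₀)
    (he : ∀ i ≠ i₀, e' i = -e i) (hg : ∀ i ≠ i₀, g' i = g i) :
    ∑ i, e' i * ∏ j ∈ univ.erase i, g' j = ∑ i, e i * ∏ j ∈ univ.erase i, g j := by
  refine Finset.sum_congr rfl fun i _ => ?_
  by_cases hi : i = i₀
  · subst hi
    rw [he₀, Finset.prod_congr rfl fun j hj => hg j (Finset.ne_of_mem_erase hj)]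
  · have hi₀ : i₀ ∈ univ.erase i := Finset.mem_erase.2 ⟨Ne.symm hi, Finset.mem_univ _⟩
    rw [he i hi, Finset.prod_eq_neg_prod_of_eq_neg_of_eq hi₀ hg₀ fun j _ hj => hg j hj,
      neg_mul_neg]

theorem PiTensorProduct.ext_bilinear {R ι κ P : Type*} [CommSemiring R] {s : ι → Type*}
    {t : κ → Type*} [∀ i, AddCommMonoid (s i)] [∀ i, Module R (s i)] [∀ k, AddCommMonoid (t k)]
    [∀ k, Module R (t k)] [AddCommMonoid P] [Module R P]
    {φ ψ : (⨂[R] i, s i) →ₗ[R] (⨂[R] k, t k) →ₗ[R] P}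
    (H : ∀ x y, φ (tprod R x) (tprod R y) = ψ (tprod R x) (tprod R y)) : φ = ψ :=
  ext <| MultilinearMap.ext fun x => ext <| MultilinearMap.ext fun y => H x y

/-- If `E_{α₀}(x, Jy)` is symmetric and `γ_{α₀}(x, Jy)` is skew-symmetric, then the
form `(x, y) ↦ Ẽ(x, J̃ y)` on the tensor product is symmetric, where
`Ẽ(⊗x_α, ⊗y_α) = Σ_α E_α(x_α, y_α) ∏_{β ≠ α} γ_β(x_β, y_β)` and `J̃` is induced by
`J` on the factor `V_{α₀}` and the identity on the other factors. -/
theorem tensor_sum_form_J_symmetric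
    (F : Type*) [Field F]
    (M : Type*) [Fintype M] [DecidableEq M]
    (V : M → Type*) [∀ α, AddCommGroup (V α)] [∀ α, Module F (V α)]
    (α₀ : M)
    (E : ∀ α, V α →ₗ[F] V α →ₗ[F] F)
    (hE : ∀ α, ∀ x, E α x x = 0)
    (γ : ∀ α, V α →ₗ[F] V α →ₗ[F] F)
    (hγ : ∀ α, ∀ x y, γ α x y = γ α y x)
    (J : V α₀ →ₗ[F] V α₀)
    (hEJ : ∀ x y, E α₀ x (J y) = E α₀ y (J x))
    (hγJ : ∀ x y, γ α₀ x (J y) = -γ α₀ y (J x))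
    (B : (PiTensorProduct F V) →ₗ[F] (PiTensorProduct F V) →ₗ[F] F)
    (hB : ∀ x y : (α : M) → V α,
      B (PiTensorProduct.tprod F x) (PiTensorProduct.tprod F y)
        = ∑ α : M, (E α (x α) (y α)) *
            ∏ β ∈ Finset.univ.erase α, γ β (x β) (y β)) :
    ∀ x y : PiTensorProduct F V,
      B x (PiTensorProduct.map
        (Function.update (fun α => (LinearMap.id : V α →ₗ[F] V α)) α₀ J) y)
        = B y (PiTensorProduct.map
            (Function.update (fun α => (LinearMap.id : V α →ₗ[F] V α)) α₀ J) x) := by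
  set I := Function.update (fun α => (LinearMap.id : V α →ₗ[F] V α)) α₀ J
  have hI₀ : ∀ v, I α₀ v = J v := fun v => by simp only [I, Function.update_self]
  have hI : ∀ α ≠ α₀, ∀ v : V α, I α v = v := fun α hα v => by
    simp only [I, Function.update_of_ne hα, LinearMap.id_apply]
  have h_tprod : ∀ x y : (α : M) → V α,
      B (PiTensorProduct.tprod F y) (PiTensorProduct.map I (PiTensorProduct.tprod F x)) =
        B (PiTensorProduct.tprod F x) (PiTensorProduct.map I (PiTensorProduct.tprod F y)) := by
    intro x y
    rw [PiTensorProduct.map_tprod, PiTensorProduct.map_tprod, hB, hB]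
    refine Finset.sum_mul_prod_erase_eq_of_signs α₀ ?_ ?_ ?_ ?_
    · rw [hI₀, hI₀, hEJ]
    · rw [hI₀, hI₀, hγJ]
    · intro α hα
      rw [hI α hα, hI α hα, ← LinearMap.IsAlt.neg (hE α)]
    · intro β hβ
      rw [hI β hβ, hI β hβ, hγ]
  have h_symm : (B.compl₂ (PiTensorProduct.map I)).flip = B.compl₂ (PiTensorProduct.map I) :=
    PiTensorProduct.ext_bilinear h_tprod
  intro x y
  exact LinearMap.congr_fun₂ h_symm y x
end

section
/- Let F be a field, M a finite index type, (V_α)_{α ∈ M} a family of F-vector spaces, α₀ ∈ M a distinguished index, and for each α ∈ M let E_α be an alternating bilinear form on V_α (E_α(x,x) = 0 for all x) and γ_α a symmetric bilinear form on V_α. Let J be a linear endomorphism of V_{α₀}, and let J̃ be the endomorphism of ⨂_{α ∈ M} V_α induced by the family of maps (I_α)_{α ∈ M} with I_{α₀} = J and I_α = id for α ≠ α₀. Let B be a bilinear form on ⨂_{α ∈ M} V_α such that on pure tensors B(⊗_α x_α, ⊗_α y_α) = Σ_{α ∈ M} ( E_α(x_α, y_α) · ∏_{β ∈ M, β ≠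 α} γ_β(x_β, y_β) ). Then for every pure tensor x = ⊗_α x_α one has B(x, J̃ x) = E_{α₀}(x_{α₀}, J x_{α₀}) · ∏_{β ∈ M, β ≠ α₀} γ_β(x_β, x_β). -/
open Function Finset

theorem PiTensorProduct.map_update_id_tprod {R ι : Type*} [CommSemiring R] [DecidableEq ι]
    {s : ι → Type*} [∀ i, AddCommMonoid (s i)] [∀ i, Module R (s i)]
    (i : ι) (f : s i →ₗ[R] s i) (x : ∀ j, s j) :
    map (update (fun j ↦ (LinearMap.id : s j →ₗ[R] s j)) i f) (tprod R x)
      = tprod R (update x i (f (x i))) := by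
  rw [map_tprod]
  congr 1
  ext j
  rcases eq_or_ne j i with rfl | hj <;> simp [*]

/-- Only the summand `α = i` survives: for `α ≠ i` the two arguments agree in slot `α`. -/
theorem sum_mul_prod_erase_update_eq_of_diag_eq_zero {R ι : Type*} [CommSemiring R]
    [Fintype ι] [DecidableEq ι] {V : ι → Type*}
    (E γ : ∀ α, V α → V α → R) (hE : ∀ α x, E α x x = 0) (x : ∀ α, V α) (i : ι) (v : V i) :
    ∑ α, E α (x α) (update x i v α) * ∏ β ∈ univ.erase α, γ β (x β) (update x i v β)
      = E i (x i) v * ∏ β ∈ univ.erase i, γ β (x β) (x β) := by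
  rw [sum_eq_single_of_mem i (mem_univ i)]
  · rw [update_self]
    congr 1
    refine prod_congr rfl fun β hβ ↦ ?_
    rw [update_of_ne (ne_of_mem_erase hβ)]
  · intro α _ hα
    rw [update_of_ne hα, hE, zero_mul]

theorem tensor_sum_form_J_diagonal_general
    (F : Type*) [Field F]
    (M : Type*) [Fintype M] [DecidableEq M]
    (V : M → Type*) [∀ α, AddCommGroup (V α)] [∀ α, Module F (V α)]
    (α₀ : M)
    (E : ∀ α, V α →ₗ[F] V α →ₗ[F] F)
    (hE : ∀ α, ∀ x, E α x x = 0)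
    (γ : ∀ α, V α →ₗ[F] V α →ₗ[F] F)
    (J : V α₀ →ₗ[F] V α₀)
    (B : (PiTensorProduct F V) →ₗ[F] (PiTensorProduct F V) →ₗ[F] F)
    (hB : ∀ x y : (α : M) → V α,
      B (PiTensorProduct.tprod F x) (PiTensorProduct.tprod F y)
        = ∑ α : M, (E α (x α) (y α)) *
            ∏ β ∈ Finset.univ.erase α, γ β (x β) (y β)) :
    ∀ x : (α : M) → V α,
      B (PiTensorProduct.tprod F x)
        (PiTensorProduct.map
          (Function.update (fun α => (LinearMap.id : V α →ₗ[F] V α)) α₀ J)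
          (PiTensorProduct.tprod F x))
        = E α₀ (x α₀) (J (x α₀)) *
            ∏ β ∈ Finset.univ.erase α₀, γ β (x β) (x β) := by
  intro x
  rw [PiTensorProduct.map_update_id_tprod, hB]
  exact sum_mul_prod_erase_update_eq_of_diag_eq_zero
    (fun α u v ↦ E α u v) (fun α u v ↦ γ α u v) hE x α₀ _

/-- Evaluation of the form `Ẽ(x, J̃ x)` on pure tensors: for
`Ẽ(⊗x_α, ⊗y_α) = Σ_α E_α(x_α, y_α) ∏_{β ≠ α} γ_β(x_β, y_β)` with each `E_α`
alternating and each `γ_β` symmetric, and `J̃` induced by `J` on the factor `V_{α₀}`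
and the identity elsewhere, one has
`Ẽ(⊗x_α, J̃(⊗x_α)) = E_{α₀}(x_{α₀}, J x_{α₀}) ∏_{β ≠ α₀} γ_β(x_β, x_β)`. -/
theorem tensor_sum_form_J_diagonal
    (F : Type*) [Field F]
    (M : Type*) [Fintype M] [DecidableEq M]
    (V : M → Type*) [∀ α, AddCommGroup (V α)] [∀ α, Module F (V α)]
    (α₀ : M)
    (E : ∀ α, V α →ₗ[F] V α →ₗ[F] F)
    (hE : ∀ α, ∀ x, E α x x = 0)
    (γ : ∀ α, V α →ₗ[F] V α →ₗ[F] F)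
    (hγ : ∀ α, ∀ x y, γ α x y = γ α y x)
    (J : V α₀ →ₗ[F] V α₀)
    (B : (PiTensorProduct F V) →ₗ[F] (PiTensorProduct F V) →ₗ[F] F)
    (hB : ∀ x y : (α : M) → V α,
      B (PiTensorProduct.tprod F x) (PiTensorProduct.tprod F y)
        = ∑ α : M, (E α (x α) (y α)) *
            ∏ β ∈ Finset.univ.erase α, γ β (x β) (y β)) :
    ∀ x : (α : M) → V α,
      B (PiTensorProduct.tprod F x)
        (PiTensorProduct.map
          (Function.update (fun α => (LinearMap.id : V α →ₗ[F] V α)) α₀ J)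
          (PiTensorProduct.tprod F x))
        = E α₀ (x α₀) (J (x α₀)) *
            ∏ β ∈ Finset.univ.erase α₀, γ β (x β) (x β) :=
  tensor_sum_form_J_diagonal_general F M V α₀ E hE γ J B hB
end
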